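/- Monotonicity of exit measure oscillation: for compact domains K_1 ⊂ K_2 of a stochastically complete Riemannian manifold M and points x, y ∈ K_1°, one has ε(K_2; x, y) ≤ ε(K_1; x, y), where ε(K; x, y) = ess sup_{z∈∂K} |dε_x^K/dε_y^K(z) − 1|. -/

import Mathlib

open MeasureTheory

/-- Monotonicity of the exit measure oscillation (Lemma 2), stated abstractly:
for compact domains `K₁ ⊆ K₂`, points `x, y ∈ K₁°`, if the strong Markov
property holds and `|dε_x^{K₁}/dε_y^{K₁} - 1| ≤ ε₁` a.e., then
`|ε_x^{K₂}(A)/ε_y^{K₂}(A) - 1| ≤ ε₁` for every `A` charged by `ε_y^{K₂}`,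
i.e. `ε(K₂; x, y) ≤ ε(K₁; x, y)`. -/
theorem exit_oscillation_monotone {M : Type*} [TopologicalSpace M] [MeasurableSpace M]
    (exit : Set M → M → Measure M)
    (K₁ K₂ : Set M) (hK₁ : IsCompact K₁) (hK₂ : IsCompact K₂) (hsub : K₁ ⊆ K₂)
    (h_prob : ∀ w : M, IsProbabilityMeasure (exit K₁ w) ∧ IsProbabilityMeasure (exit K₂ w))
    (x y : M) (hx : x ∈ interior K₁) (hy : y ∈ interior K₁)
    -- strong Markov property:
    (h_markov : ∀ w ∈ interior K₁, ∀ A : Set M, MeasurableSet A →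
      exit K₂ w A = ∫⁻ z, exit K₂ z A ∂(exit K₁ w))
    (h_ac : exit K₁ x ≪ exit K₁ y)
    (ε₁ : ℝ) (hε₁ : 0 ≤ ε₁)
    (h_rn : ∀ᵐ z ∂(exit K₁ y), |((exit K₁ x).rnDeriv (exit K₁ y) z).toReal - 1| ≤ ε₁) :
    ∀ A : Set M, MeasurableSet A → exit K₂ y A ≠ 0 →
      |(exit K₂ x A).toReal / (exit K₂ y A).toReal - 1| ≤ ε₁ := by
  intro A hA hb0
  set μ := exit K₁ x with hμdef
  set ν := exit K₁ y with hνdef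
  haveI : IsProbabilityMeasure μ := (h_prob x).1
  haveI : IsProbabilityMeasure ν := (h_prob y).1
  haveI : IsProbabilityMeasure (exit K₂ x) := (h_prob x).2
  haveI : IsProbabilityMeasure (exit K₂ y) := (h_prob y).2
  set g := μ.rnDeriv ν with hgdef
  have hgfin : ∀ᵐ z ∂ν, g z < ⊤ := Measure.rnDeriv_lt_top μ ν
  have hub : ∀ᵐ z ∂ν, g z ≤ ENNReal.ofReal (1 + ε₁) := by
    filter_upwards [h_rn, hgfin] with z hz hzfin
    have h1 : (g z).toReal ≤ 1 + ε₁ := by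
      have := abs_le.mp hz; linarith [this.2]
    calc g z = ENNReal.ofReal (g z).toReal := (ENNReal.ofReal_toReal hzfin.ne).symm
      _ ≤ ENNReal.ofReal (1 + ε₁) := ENNReal.ofReal_le_ofReal h1
  have hlb : ∀ᵐ z ∂ν, ENNReal.ofReal (1 - ε₁) ≤ g z := by
    filter_upwards [h_rn] with z hz
    have h1 : 1 - ε₁ ≤ (g z).toReal := by
      have := abs_le.mp hz; linarith [this.1]
    calc ENNReal.ofReal (1 - ε₁) ≤ ENNReal.ofReal (g z).toReal :=
          ENNReal.ofReal_le_ofReal h1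
      _ ≤ g z := ENNReal.ofReal_toReal_le
  have hμν : μ = ν.withDensity g := (Measure.withDensity_rnDeriv_eq μ ν h_ac).symm
  have hu : μ ≤ (ENNReal.ofReal (1 + ε₁)) • ν := by
    rw [hμν]
    calc ν.withDensity g ≤ ν.withDensity (fun _ => ENNReal.ofReal (1 + ε₁)) :=
          withDensity_mono hub
      _ = (ENNReal.ofReal (1 + ε₁)) • ν := withDensity_const _
  have hl : (ENNReal.ofReal (1 - ε₁)) • ν ≤ μ := by
    rw [hμν]
    calc (ENNReal.ofReal (1 - ε₁)) • ν
        = ν.withDensity (fun _ => ENNReal.ofReal (1 - ε₁)) := (withDensity_const _).symm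
      _ ≤ ν.withDensity g := withDensity_mono hlb
  have hax : exit K₂ x A = ∫⁻ z, exit K₂ z A ∂μ := h_markov x hx A hA
  have hay : exit K₂ y A = ∫⁻ z, exit K₂ z A ∂ν := h_markov y hy A hA
  have ha_ne : exit K₂ x A ≠ ⊤ := measure_ne_top _ _
  have hb_ne : exit K₂ y A ≠ ⊤ := measure_ne_top _ _
  have hupper : exit K₂ x A ≤ ENNReal.ofReal (1 + ε₁) * exit K₂ y A := by
    rw [hax, hay]
    calc ∫⁻ z, exit K₂ z A ∂μ ≤ ∫⁻ z, exit K₂ z A ∂((ENNReal.ofReal (1 + ε₁)) • ν) :=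
          lintegral_mono' hu le_rfl
      _ = ENNReal.ofReal (1 + ε₁) * ∫⁻ z, exit K₂ z A ∂ν := lintegral_smul_measure _ _
  have hlower : ENNReal.ofReal (1 - ε₁) * exit K₂ y A ≤ exit K₂ x A := by
    rw [hax, hay]
    calc ENNReal.ofReal (1 - ε₁) * ∫⁻ z, exit K₂ z A ∂ν
        = ∫⁻ z, exit K₂ z A ∂((ENNReal.ofReal (1 - ε₁)) • ν) :=
          by rw [lintegral_smul_measure, smul_eq_mul]
      _ ≤ ∫⁻ z, exit K₂ z A ∂μ := lintegral_mono' hl le_rfl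
  set a := (exit K₂ x A).toReal with hadef
  set b := (exit K₂ y A).toReal with hbdef
  have hbpos : 0 < b := ENNReal.toReal_pos hb0 hb_ne
  have hanneg : 0 ≤ a := ENNReal.toReal_nonneg
  have hup : a ≤ (1 + ε₁) * b := by
    have h1 : (exit K₂ x A).toReal ≤ (ENNReal.ofReal (1 + ε₁) * exit K₂ y A).toReal := by
      apply ENNReal.toReal_mono _ hupper
      exact ENNReal.mul_ne_top ENNReal.ofReal_ne_top hb_ne
    rwa [ENNReal.toReal_mul, ENNReal.toReal_ofReal (by linarith)] at h1
  rw [abs_le]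
  constructor
  · -- lower bound: -ε₁ ≤ a / b - 1
    rcases le_or_gt ε₁ 1 with hε | hε
    · have h1 : (ENNReal.ofReal (1 - ε₁) * exit K₂ y A).toReal ≤ (exit K₂ x A).toReal :=
        ENNReal.toReal_mono ha_ne hlower
      rw [ENNReal.toReal_mul, ENNReal.toReal_ofReal (by linarith)] at h1
      have h2 : 1 - ε₁ ≤ a / b := by rw [le_div_iff₀ hbpos]; exact h1
      linarith
    · have : 0 ≤ a / b := div_nonneg hanneg hbpos.le
      linarith
  · rw [sub_le_iff_le_add', div_le_iff₀ hbpos]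
    nlinarith
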